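/- Let q ≥ 1 and let d : {1,...,q} → {0,1} be a sequence of binary digits. Set t = ∑_{j=1}^q d_j · 2^{-j}. Then ∑_{i=0}^{q-1} {2^i t} = (∑_{j=1}^q d_j) - t, where {x} denotes the fractional part of x. -/

import Mathlib

/-!
Doubling shifts the binary digits: if `t = 0.d₁d₂…d_q` then `2t = d₁ + t'` with `t' = 0.d₂…d_q`,
so `{2^(i+1) t} = {2^i t'}`. Since `0 ≤ t < 1` we have `{t} = t`, and induction on `q` gives
`∑ {2^i t} = t + (∑_{j ≥ 2} d_j - t') = t + ∑_{j ≥ 2} d_j - (2t - d₁) = ∑ d_j - t`.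
-/

open Finset

theorem sum_Icc_one_succ {M : Type*} [AddCommMonoid M] (f : ℕ → M) (q : ℕ) :
    ∑ j ∈ Icc 1 (q + 1), f j = f 1 + ∑ j ∈ Icc 1 q, f (j + 1) := by
  induction q with
  | zero => simp
  | succ q ih => rw [sum_Icc_succ_top (by omega), ih, sum_Icc_succ_top (by omega), add_assoc]

noncomputable def binaryValue (d : ℕ → ℕ) (q : ℕ) : ℝ := ∑ j ∈ Icc 1 q, (d j : ℝ) * 2⁻¹ ^ j

theorem binaryValue_succ (d : ℕ → ℕ) (q : ℕ) :
    binaryValue d (q + 1) = (d 1 + binaryValue (fun j => d (j + 1)) q) / 2 := by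
  rw [binaryValue, binaryValue, sum_Icc_one_succ, add_div, sum_div]
  congr 1
  · ring
  · exact sum_congr rfl fun j _ => by ring

theorem binaryValue_nonneg (d : ℕ → ℕ) (q : ℕ) : 0 ≤ binaryValue d q :=
  sum_nonneg fun _ _ => by positivity

theorem binaryValue_lt_one {d : ℕ → ℕ} (hd : ∀ j, d j ≤ 1) (q : ℕ) : binaryValue d q < 1 := by
  induction q generalizing d with
  | zero => simp [binaryValue]
  | succ q ih =>
    have h1 : (d 1 : ℝ) ≤ 1 := mod_cast hd 1
    have ht' := ih fun j => hd (j + 1)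
    rw [binaryValue_succ]
    linarith

theorem sum_fract_two_pow_mul_binaryValue {d : ℕ → ℕ} (hd : ∀ j, d j ≤ 1) (q : ℕ) :
    ∑ i ∈ range q, Int.fract (2 ^ i * binaryValue d q)
      = ∑ j ∈ Icc 1 q, (d j : ℝ) - binaryValue d q := by
  induction q generalizing d with
  | zero => simp [binaryValue]
  | succ q ih =>
    set t' := binaryValue (fun j => d (j + 1)) q
    have hdouble : 2 * binaryValue d (q + 1) = d 1 + t' := by rw [binaryValue_succ]; ring
    have hshift : ∀ i,
        Int.fract (2 ^ (i + 1) * binaryValue d (q + 1)) = Int.fract (2 ^ i * t') := by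
      intro i
      rw [pow_succ, mul_assoc, hdouble, mul_add]
      exact_mod_cast Int.fract_natCast_add (2 ^ i * d 1) _
    have hfract : Int.fract (binaryValue d (q + 1)) = binaryValue d (q + 1) :=
      Int.fract_eq_self.mpr ⟨binaryValue_nonneg d _, binaryValue_lt_one hd _⟩
    rw [sum_range_succ', pow_zero, one_mul, hfract, sum_congr rfl fun i _ => hshift i,
      ih fun j => hd (j + 1), sum_Icc_one_succ]
    linarith

theorem stmt_1 (q : ℕ) (d : ℕ → ℕ) (hd : ∀ j, d j = 0 ∨ d j = 1)
    (t : ℝ) (ht : t = ∑ j ∈ Finset.Icc 1 q, (d j : ℝ) * (2 : ℝ)⁻¹ ^ j) :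
    ∑ i ∈ Finset.range q, Int.fract ((2 : ℝ) ^ i * t)
      = (∑ j ∈ Finset.Icc 1 q, (d j : ℝ)) - t := by
  subst ht
  exact sum_fract_two_pow_mul_binaryValue (fun j => by rcases hd j with h | h <;> omega) q
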